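/- arXiv:2210.15820 — 2 statements merged into one kernel-verified Lean document; each statement's English description precedes it below -/
import Mathlib

section
/- For any CP map Λ1 ⊗ Λ2 where Λ1 and Λ2 each have Kraus representations with real Kraus operators, the map commutes with partial transpose on the second system: (Λ1 ⊗ Λ2)(ρ^{T_B}) = ((Λ1 ⊗ Λ2)(ρ))^{T_B} for every matrix ρ on the tensor product space. -/
open Matrix
open scoped ComplexOrder

/-- Singular values of a complex square matrix: square roots of eigenvalues of `Aᴴ * A`. -/
noncomputable def singularValues {n : Type*} [Fintype n] [DecidableEq n]
    (A : Matrix n n ℂ) : n → ℝ :=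
  fun i => Real.sqrt ((Matrix.isHermitian_conjTranspose_mul_self A).eigenvalues i)

/-- Trace norm: sum of singular values. -/
noncomputable def traceNorm {n : Type*} [Fintype n] [DecidableEq n]
    (A : Matrix n n ℂ) : ℝ := ∑ i, singularValues A i

/-- The square root of a positive semidefinite matrix (the former `Matrix.PosSemidef.sqrt`). -/
noncomputable def Matrix.PosSemidef.sqrt {n : Type*} [Fintype n] [DecidableEq n]
    {A : Matrix n n ℂ} (hA : A.PosSemidef) : Matrix n n ℂ :=
  hA.1.eigenvectorUnitary.1 * diagonal ((↑) ∘ (√·) ∘ hA.1.eigenvalues) *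
    (star hA.1.eigenvectorUnitary : Matrix n n ℂ)

/-- Positive-semidefinite square root (zero for non-PSD input). -/
noncomputable def msqrt {n : Type*} [Fintype n] [DecidableEq n]
    (A : Matrix n n ℂ) : Matrix n n ℂ :=
  open scoped Classical in
  if h : A.PosSemidef then h.sqrt else 0

/-- Root fidelity √F(ρ,σ) = Tr √(√ρ σ √ρ). -/
noncomputable def rootFid {n : Type*} [Fintype n] [DecidableEq n]
    (ρ σ : Matrix n n ℂ) : ℝ := ((msqrt (msqrt ρ * σ * msqrt ρ)).trace).re

/-- A density matrix: positive semidefinite with unit trace. -/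
def IsDensity {n : Type*} [Fintype n] [DecidableEq n] (ρ : Matrix n n ℂ) : Prop :=
  ρ.PosSemidef ∧ ρ.trace = 1

/-- Partial transpose on the second tensor factor. -/
noncomputable def ptB {dA dB : ℕ} (X : Matrix (Fin dA × Fin dB) (Fin dA × Fin dB) ℂ) :
    Matrix (Fin dA × Fin dB) (Fin dA × Fin dB) ℂ :=
  Matrix.of fun p q => X (p.1, q.2) (q.1, p.2)

/-- Hermitian inner product ⟨x,y⟩ = ∑ conj(xᵢ) yᵢ. -/
noncomputable def hinner {ι : Type*} [Fintype ι] (x y : ι → ℂ) : ℂ := ∑ i, star (x i) * y i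

/-- Entrywise complex conjugate of a vector. -/
noncomputable def cconj {ι : Type*} (x : ι → ℂ) : ι → ℂ := fun i => star (x i)
open Kronecker

/-! Partial transposition on the second factor moves the second-factor parts of a sandwich
`(M ⊗ N) X (P ⊗ Q)` to the opposite sides, transposed: the result is `(M ⊗ Qᵀ) (ptB X) (P ⊗ Nᵀ)`.
For a Kraus term `N = B`, `Q = Bᴴ`, and a real `B` has `Bᴴ = Bᵀ`, so the term keeps its shape. -/

lemma ptB_sum {dA dB : ℕ} {ι : Type*} (s : Finset ι)
    (X : ι → Matrix (Fin dA × Fin dB) (Fin dA × Fin dB) ℂ) :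
    ptB (∑ i ∈ s, X i) = ∑ i ∈ s, ptB (X i) := by
  ext p q
  simp [ptB, Matrix.sum_apply]

lemma ptB_kronecker_mul_mul_kronecker {dA dB : ℕ} (M P : Matrix (Fin dA) (Fin dA) ℂ)
    (N Q : Matrix (Fin dB) (Fin dB) ℂ) (X : Matrix (Fin dA × Fin dB) (Fin dA × Fin dB) ℂ) :
    ptB ((M ⊗ₖ N) * X * (P ⊗ₖ Q)) = (M ⊗ₖ Qᵀ) * ptB X * (P ⊗ₖ Nᵀ) := by
  ext ⟨p₁, p₂⟩ ⟨q₁, q₂⟩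
  simp only [ptB, of_apply, mul_apply, kroneckerMap_apply, transpose_apply, Fintype.sum_prod_type,
    Finset.sum_mul]
  refine Finset.sum_congr rfl fun s₁ _ => ?_
  rw [Finset.sum_comm]
  conv_rhs => rw [Finset.sum_comm]
  refine Finset.sum_congr rfl fun r₁ _ => ?_
  rw [Finset.sum_comm]
  exact Finset.sum_congr rfl fun _ _ => Finset.sum_congr rfl fun _ _ => by ring

lemma conjTranspose_eq_transpose_of_im_eq_zero {n : Type*} (B : Matrix n n ℂ)
    (hB : ∀ a b, (B a b).im = 0) : Bᴴ = Bᵀ := by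
  ext a b
  exact Complex.conj_eq_iff_im.mpr (hB b a)

theorem real_tensor_ptB_covariant_general {dA dB nA nB : ℕ}
    (A : Fin nA → Matrix (Fin dA) (Fin dA) ℂ)
    (B : Fin nB → Matrix (Fin dB) (Fin dB) ℂ)
    (hB : ∀ j a b, (B j a b).im = 0)
    (ρ : Matrix (Fin dA × Fin dB) (Fin dA × Fin dB) ℂ) :
    ∑ i, ∑ j, (A i ⊗ₖ B j) * ptB ρ * (A i ⊗ₖ B j)ᴴ
      = ptB (∑ i, ∑ j, (A i ⊗ₖ B j) * ρ * (A i ⊗ₖ B j)ᴴ) := by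
  have hBreal j := conjTranspose_eq_transpose_of_im_eq_zero (B j) (hB j)
  simp only [ptB_sum, conjTranspose_kronecker, hBreal, ptB_kronecker_mul_mul_kronecker,
    transpose_transpose]

/-- a tensor product of maps with real Kraus operators commutes with
partial transpose on the second system. -/
theorem real_tensor_ptB_covariant {dA dB nA nB : ℕ}
    (A : Fin nA → Matrix (Fin dA) (Fin dA) ℂ)
    (B : Fin nB → Matrix (Fin dB) (Fin dB) ℂ)
    (hA : ∀ i a b, (A i a b).im = 0) (hB : ∀ j a b, (B j a b).im = 0)
    (ρ : Matrix (Fin dA × Fin dB) (Fin dA × Fin dB) ℂ) :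
    ∑ i, ∑ j, (A i ⊗ₖ B j) * ptB ρ * (A i ⊗ₖ B j)ᴴ
      = ptB (∑ i, ∑ j, (A i ⊗ₖ B j) * ρ * (A i ⊗ₖ B j)ᴴ) :=
  real_tensor_ptB_covariant_general A B hB ρ
end

section
/- For a unit vector ψ ∈ ℂ^d, the geometric measure of imaginarity I_g(ψ) := 1 − max over real unit vectors φ of |⟨φ,ψ⟩|² equals (1 − |⟨ψ*, ψ⟩|)/2, where ψ* is the entrywise complex conjugate of ψ. -/
open Matrix
open scoped ComplexOrder

/-!
Multiplying `ψ` by a phase `ω` changes neither `|⟨φ, ψ⟩|` nor `|⟨ψ*, ψ⟩|`, and can be chosen to make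
`⟨ψ*, ψ⟩ = ∑ ψᵢ²` real and nonnegative. Write then `ψ = a + i b` with real vectors `a, b`: since
`∑ ψᵢ² = ‖a‖² - ‖b‖² + 2i⟪a, b⟫`, we get `a ⟂ b` and `‖a‖² - ‖b‖² = |⟨ψ*, ψ⟩|`, while `‖a‖² + ‖b‖² = 1`.
For a real unit vector `φ`, `|⟨φ, ψ⟩|² = ⟪φ, a⟫² + ⟪φ, b⟫²`, and for orthogonal `a, b` with `‖b‖ ≤ ‖a‖`
this is at most `‖a‖² = (1 + |⟨ψ*, ψ⟩|) / 2`, with equality at `φ = a / ‖a‖`.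
-/

open scoped RealInnerProductSpace

theorem inner_sq_add_inner_sq_le_of_inner_eq_zero {E : Type*} [SeminormedAddCommGroup E]
    [InnerProductSpace ℝ E] {a b : E} (hab : ⟪a, b⟫ = 0) (hba : ‖b‖ ≤ ‖a‖) (f : E) :
    ⟪f, a⟫ ^ 2 + ⟪f, b⟫ ^ 2 ≤ ‖a‖ ^ 2 * ‖f‖ ^ 2 := by
  set p := ⟪f, a⟫
  set q := ⟪f, b⟫
  -- Cauchy–Schwarz for `f` and `g`, where `⟪f, g⟫ = p² + q²` and `‖g‖² ≤ ‖a‖² (p² + q²)`.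
  set g := p • a + q • b
  have hfg : ⟪f, g⟫ = p ^ 2 + q ^ 2 := by
    simp only [g, inner_add_right, real_inner_smul_right]; ring
  have hgg : ⟪g, g⟫ ≤ ‖a‖ ^ 2 * (p ^ 2 + q ^ 2) := by
    simp only [g, inner_add_left, inner_add_right, real_inner_smul_left, real_inner_smul_right,
      real_inner_comm a b, hab]
    rw [real_inner_self_eq_norm_sq, real_inner_self_eq_norm_sq]
    nlinarith [pow_le_pow_left₀ (norm_nonneg b) hba 2, sq_nonneg q]
  have hcs : (p ^ 2 + q ^ 2) * (p ^ 2 + q ^ 2) ≤ (‖a‖ ^ 2 * ‖f‖ ^ 2) * (p ^ 2 + q ^ 2) := by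
    calc (p ^ 2 + q ^ 2) * (p ^ 2 + q ^ 2) = ⟪f, g⟫ * ⟪f, g⟫ := by rw [hfg]
      _ ≤ ⟪f, f⟫ * ⟪g, g⟫ := real_inner_mul_inner_self_le f g
      _ ≤ ‖f‖ ^ 2 * (‖a‖ ^ 2 * (p ^ 2 + q ^ 2)) := by
        rw [real_inner_self_eq_norm_sq]; gcongr
      _ = _ := by ring
  nlinarith [sq_nonneg p, sq_nonneg q, mul_nonneg (sq_nonneg ‖a‖) (sq_nonneg ‖f‖)]

theorem isGreatest_inner_sq_add_inner_sq {E : Type*} [NormedAddCommGroup E]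
    [InnerProductSpace ℝ E] {a b : E} (hab : ⟪a, b⟫ = 0) (hba : ‖b‖ ≤ ‖a‖) (ha : a ≠ 0) :
    IsGreatest {t | ∃ f : E, ‖f‖ = 1 ∧ t = ⟪f, a⟫ ^ 2 + ⟪f, b⟫ ^ 2} (‖a‖ ^ 2) := by
  refine ⟨⟨‖a‖⁻¹ • a, norm_smul_inv_norm ha, ?_⟩, ?_⟩
  · have : ‖a‖ ≠ 0 := norm_ne_zero_iff.mpr ha
    simp only [real_inner_smul_left, real_inner_self_eq_norm_sq, hab]
    field_simp
    ring
  · rintro t ⟨f, hf, rfl⟩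
    simpa [hf] using inner_sq_add_inner_sq_le_of_inner_eq_zero hab hba f

theorem exists_norm_eq_one_sq_mul_eq_norm (s : ℂ) : ∃ ω : ℂ, ‖ω‖ = 1 ∧ ω ^ 2 * s = ‖s‖ := by
  set ω := Complex.exp (↑(-(s.arg / 2)) * Complex.I)
  have hω : ω ^ 2 * Complex.exp (s.arg * Complex.I) = 1 := by
    rw [← Complex.exp_nat_mul, ← Complex.exp_add, ← Complex.exp_zero]
    push_cast
    ring_nf
  refine ⟨ω, Complex.norm_exp_ofReal_mul_I _, ?_⟩
  calc ω ^ 2 * s = ω ^ 2 * (‖s‖ * Complex.exp (s.arg * Complex.I)) := by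
        rw [Complex.norm_mul_exp_arg_mul_I]
    _ = ‖s‖ * (ω ^ 2 * Complex.exp (s.arg * Complex.I)) := by ring
    _ = ‖s‖ := by rw [hω, mul_one]

section

variable {ι : Type*}

noncomputable def reVec (x : ι → ℂ) : EuclideanSpace ℝ ι := WithLp.toLp 2 fun i => (x i).re

noncomputable def imVec (x : ι → ℂ) : EuclideanSpace ℝ ι := WithLp.toLp 2 fun i => (x i).im

@[simp] theorem reVec_apply (x : ι → ℂ) (i : ι) : reVec x i = (x i).re := rfl

@[simp] theorem imVec_apply (x : ι → ℂ) (i : ι) : imVec x i = (x i).im := rfl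

theorem reVec_cconj (x : ι → ℂ) : reVec (cconj x) = reVec x := by
  ext i; simp [cconj]

theorem imVec_cconj (x : ι → ℂ) : imVec (cconj x) = -imVec x := by
  ext i; simp [cconj]

theorem cconj_smul (c : ℂ) (x : ι → ℂ) : cconj (c • x) = star c • cconj x := by
  ext i; simp [cconj]

variable [Fintype ι]

theorem re_hinner (x y : ι → ℂ) :
    (hinner x y).re = ⟪reVec x, reVec y⟫ + ⟪imVec x, imVec y⟫ := by
  simp only [hinner, Complex.re_sum, Complex.mul_re, PiLp.inner_apply, reVec_apply, imVec_apply,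
    Complex.star_def, Complex.conj_re, Complex.conj_im, RCLike.inner_apply,
    ← Finset.sum_add_distrib]
  exact Finset.sum_congr rfl fun _ _ => by simp; ring

theorem im_hinner (x y : ι → ℂ) :
    (hinner x y).im = ⟪reVec x, imVec y⟫ - ⟪imVec x, reVec y⟫ := by
  simp only [hinner, Complex.im_sum, Complex.mul_im, PiLp.inner_apply, reVec_apply, imVec_apply,
    Complex.star_def, Complex.conj_re, Complex.conj_im, RCLike.inner_apply,
    ← Finset.sum_sub_distrib]
  exact Finset.sum_congr rfl fun _ _ => by simp; ring

theorem hinner_smul_left (c : ℂ) (x y : ι → ℂ) : hinner (c • x) y = star c * hinner x y := by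
  simp [hinner, Finset.mul_sum, mul_assoc]

theorem hinner_smul_right (c : ℂ) (x y : ι → ℂ) : hinner x (c • y) = c * hinner x y := by
  simp [hinner, Finset.mul_sum, mul_left_comm]

theorem re_hinner_self (x : ι → ℂ) : (hinner x x).re = ‖reVec x‖ ^ 2 + ‖imVec x‖ ^ 2 := by
  rw [re_hinner, real_inner_self_eq_norm_sq, real_inner_self_eq_norm_sq]

theorem re_hinner_cconj_self (x : ι → ℂ) :
    (hinner (cconj x) x).re = ‖reVec x‖ ^ 2 - ‖imVec x‖ ^ 2 := by
  rw [re_hinner, reVec_cconj, imVec_cconj, inner_neg_left, real_inner_self_eq_norm_sq,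
    real_inner_self_eq_norm_sq, sub_eq_add_neg]

theorem im_hinner_cconj_self (x : ι → ℂ) :
    (hinner (cconj x) x).im = 2 * ⟪reVec x, imVec x⟫ := by
  rw [im_hinner, reVec_cconj, imVec_cconj, inner_neg_left, real_inner_comm (reVec x)]
  ring

theorem sq_norm_hinner_of_imVec_eq_zero {x : ι → ℂ} (hx : imVec x = 0) (y : ι → ℂ) :
    ‖hinner x y‖ ^ 2 = ⟪reVec x, reVec y⟫ ^ 2 + ⟪reVec x, imVec y⟫ ^ 2 := by
  rw [Complex.sq_norm, Complex.normSq_apply, re_hinner, im_hinner, hx]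
  simp only [inner_zero_left, add_zero, sub_zero]
  ring

theorem setOf_sq_norm_hinner_real_unit (y : ι → ℂ) :
    {t : ℝ | ∃ φ : ι → ℂ, (∀ i, (φ i).im = 0) ∧ hinner φ φ = 1 ∧ t = ‖hinner φ y‖ ^ 2} =
      {t | ∃ f : EuclideanSpace ℝ ι, ‖f‖ = 1 ∧ t = ⟪f, reVec y⟫ ^ 2 + ⟪f, imVec y⟫ ^ 2} := by
  ext t
  constructor
  · rintro ⟨φ, hφ, hunit, rfl⟩
    have him : imVec φ = 0 := by ext i; exact hφ i
    have hre := congrArg Complex.re hunit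
    rw [re_hinner_self, him, norm_zero, Complex.one_re] at hre
    refine ⟨reVec φ, ?_, sq_norm_hinner_of_imVec_eq_zero him y⟩
    exact (pow_eq_one_iff_of_nonneg (norm_nonneg _) two_ne_zero).mp (by simpa using hre)
  · rintro ⟨f, hf, rfl⟩
    set φ : ι → ℂ := fun i => f i
    have hre : reVec φ = f := by ext i; simp [φ]
    have him : imVec φ = 0 := by ext i; simp [φ]
    refine ⟨φ, fun i => Complex.ofReal_im _, Complex.ext ?_ ?_, ?_⟩
    · simp [re_hinner_self, hre, him, hf]
    · simp [im_hinner, him]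
    · rw [sq_norm_hinner_of_imVec_eq_zero him, hre]

theorem isGreatest_setOf_sq_norm_hinner_real_unit {x : ι → ℂ} (hx : hinner x x = 1) {c : ℝ}
    (hc : hinner (cconj x) x = c) (hc0 : 0 ≤ c) :
    IsGreatest {t : ℝ | ∃ φ : ι → ℂ, (∀ i, (φ i).im = 0) ∧ hinner φ φ = 1 ∧
      t = ‖hinner φ x‖ ^ 2} ((1 + c) / 2) := by
  have hunit := re_hinner_self x
  have hdiff := re_hinner_cconj_self x
  have horth := im_hinner_cconj_self x
  rw [hx, Complex.one_re] at hunit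
  rw [hc, Complex.ofReal_re] at hdiff
  rw [hc, Complex.ofReal_im, zero_eq_mul, or_iff_right two_ne_zero] at horth
  rw [setOf_sq_norm_hinner_real_unit, show (1 + c) / 2 = ‖reVec x‖ ^ 2 by linarith]
  refine isGreatest_inner_sq_add_inner_sq horth ?_ ?_
  · nlinarith [norm_nonneg (reVec x), norm_nonneg (imVec x)]
  · rintro h
    rw [h, norm_zero] at hunit hdiff
    nlinarith

end

/-- for a unit vector ψ, the maximum of |⟨φ,ψ⟩|² over real unit vectors φ
is (1+|⟨ψ*,ψ⟩|)/2, so that 1 minus this maximum equals (1−|⟨ψ*,ψ⟩|)/2. -/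
theorem geometric_imaginarity_pure {d : ℕ} (ψ : Fin d → ℂ) (hψ : hinner ψ ψ = 1) :
    ∃ M : ℝ, IsGreatest
        {t : ℝ | ∃ φ : Fin d → ℂ, (∀ i, (φ i).im = 0) ∧ hinner φ φ = 1 ∧
          t = ‖hinner φ ψ‖ ^ 2} M ∧
      1 - M = (1 - ‖hinner (cconj ψ) ψ‖) / 2 := by
  generalize hs : hinner (cconj ψ) ψ = s
  obtain ⟨ω, hω, hωs⟩ := exists_norm_eq_one_sq_mul_eq_norm s
  have hphase (φ : Fin d → ℂ) : ‖hinner φ ψ‖ = ‖hinner φ (ω • ψ)‖ := by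
    rw [hinner_smul_right, norm_mul, hω, one_mul]
  have hunit : hinner (ω • ψ) (ω • ψ) = 1 := by
    rw [hinner_smul_left, hinner_smul_right, hψ, mul_one, Complex.star_def, Complex.conj_mul', hω]
    simp
  have hconj : hinner (cconj (ω • ψ)) (ω • ψ) = ‖s‖ := by
    rw [cconj_smul, hinner_smul_left, hinner_smul_right, star_star, hs, ← hωs]
    ring
  simp only [hphase]
  exact ⟨_, isGreatest_setOf_sq_norm_hinner_real_unit hunit hconj (norm_nonneg s), by ring⟩
end
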